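/- ψ₀(F) implies F is predense: if there is a club E and a continuous chain ⟨N_ν : ν ∈ E⟩ of countable subsets of F such that for every ν ∈ E and t ∈ T_ν there is ν_t < ν with: for all ξ ∈ (ν_t, ν) ∩ E there is A ∈ F ∩ N_ξ containing t ↾ ξ, then F^⊥ = ∅, i.e. every subtree of T has uncountable intersection with some member of F. -/

import Mathlib

noncomputable section

namespace Basis5

/-- The first uncountable ordinal. -/
def omega1 : Ordinal.{0} := (Cardinal.aleph 1).ord

/-- A node of the binary tree `2^{<ω₁}`: a function defined (i.e. `some`-valued)
exactly on a countable ordinal. -/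
def IsNodeFun (f : Ordinal.{0} → Option Bool) : Prop :=
  ∃ a, a < omega1 ∧ ∀ ξ, (f ξ).isSome ↔ ξ < a

def BNode := {f : Ordinal → Option Bool // IsNodeFun f}

/-- The height (domain) of a node. -/
def ht (t : BNode) : Ordinal := sInf {a | ∀ ξ, (t.1 ξ).isSome ↔ ξ < a}

/-- Restriction of a node to (at most) height `α`. -/
def restrict (t : BNode) (α : Ordinal) : BNode :=
  ⟨fun ξ => if ξ < α then t.1 ξ else none, by
    obtain ⟨a, ha, hfa⟩ := t.2
    refine ⟨min α a, lt_of_le_of_lt (min_le_right _ _) ha, fun ξ => ?_⟩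
    by_cases h : ξ < α
    · simp [h, hfa ξ, lt_min_iff]
    · simp [h, lt_min_iff]⟩

/-- `s` is an initial segment of `t` (the tree order of `2^{<ω₁}`). -/
def extends' (s t : BNode) : Prop := restrict t (ht s) = s

/-- `s` and `t` are incomparable in the tree order. -/
def Incomp (s t : BNode) : Prop := ¬ extends' s t ∧ ¬ extends' t s

/-- `D(s,t)`, the set of coordinates where `s` and `t` differ. -/
def diffSet (s t : BNode) : Set Ordinal := {ξ | s.1 ξ ≠ t.1 ξ}

/-- `Δ(s,t) = min D(s,t)`. -/
def delta (s t : BNode) : Ordinal := sInf (diffSet s t)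

/-- The meet `s ∧ t = s ↾ Δ(s,t)`. -/
def meet (s t : BNode) : BNode := restrict s (delta s t)

/-- Lexicographic (non-strict) order on nodes of the same height. -/
def lexLE (s t : BNode) : Prop := s = t ∨ t.1 (delta s t) = some true

/-- `∧(X)`: the set of pairwise meets of incomparable elements of `X`. -/
def wedgeSet (X : Set BNode) : Set BNode :=
  {w | ∃ s ∈ X, ∃ t ∈ X, Incomp s t ∧ w = meet s t}

def DownClosed (A : Set BNode) : Prop := ∀ t ∈ A, ∀ α, restrict t α ∈ A

def IsAntichainN (X : Set BNode) : Prop := ∀ s ∈ X, ∀ t ∈ X, s ≠ t → Incomp s t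

/-- An Aronszajn tree: uncountable, downward closed, countable levels and chains. -/
def IsAronszajn (T : Set BNode) : Prop :=
  DownClosed T ∧ ¬ T.Countable ∧ (∀ α, {t : BNode | t ∈ T ∧ ht t = α}.Countable) ∧
    ∀ c : Set BNode, c ⊆ T → (∀ s ∈ c, ∀ t ∈ c, extends' s t ∨ extends' t s) → c.Countable

/-- A subtree: an uncountable downward closed subset. -/
def IsSubtree (T A : Set BNode) : Prop := A ⊆ T ∧ DownClosed A ∧ ¬ A.Countable

def Coherent (T : Set BNode) : Prop :=
  ∀ s ∈ T, ∀ t ∈ T, ht s = ht t → (diffSet s t).Finite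

def IsSpecial (T : Set BNode) : Prop :=
  ∃ f : BNode → ℕ, ∀ s ∈ T, ∀ t ∈ T, extends' s t → s ≠ t → f s ≠ f t

def FinModClosed (T : Set BNode) : Prop :=
  ∀ t ∈ T, ∀ s : BNode, ht s = ht t → (diffSet s t).Finite → s ∈ T

/-- Club subsets of `ω₁`. -/
def IsClubBelow (C : Set Ordinal) : Prop :=
  C ⊆ Set.Iio omega1 ∧ (∀ a < omega1, ∃ b ∈ C, a < b) ∧
    ∀ a < omega1, (C ∩ Set.Iio a).Nonempty → sSup (C ∩ Set.Iio a) = a → a ∈ C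

/-- Stationary subsets of `ω₁`. -/
def IsStationary (S : Set Ordinal) : Prop :=
  S ⊆ Set.Iio omega1 ∧ ∀ C, IsClubBelow C → (S ∩ C).Nonempty

/-- `a` is a limit point of `C`. -/
def IsLimitOf (C : Set Ordinal) (a : Ordinal) : Prop :=
  (C ∩ Set.Iio a).Nonempty ∧ sSup (C ∩ Set.Iio a) = a

/-- Membership in `T^{[n]}`: an `≤_lex`-nondecreasing `n`-tuple from a single level of `T`. -/
def IsTup (T : Set BNode) (n : ℕ) (σ : Fin n → BNode) : Prop :=
  (∀ i, σ i ∈ T) ∧ (∀ i j, ht (σ i) = ht (σ j)) ∧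
    ∀ i j : Fin n, i ≤ j → lexLE (σ i) (σ j)

/-- Coordinatewise restriction of a tuple. -/
def tres {n : ℕ} (σ : Fin n → BNode) (α : Ordinal) : Fin n → BNode :=
  fun i => restrict (σ i) α

def tExt {n : ℕ} (σ τ : Fin n → BNode) : Prop := ∀ i, extends' (σ i) (τ i)

def tIncomp {n : ℕ} (σ τ : Fin n → BNode) : Prop := ¬ tExt σ τ ∧ ¬ tExt τ σ

def tdiff {n : ℕ} (σ τ : Fin n → BNode) : Set Ordinal :=
  {ξ | ∃ i, (σ i).1 ξ ≠ (τ i).1 ξ}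

/-- `Δ(σ,τ)` for tuples: least level where some coordinate differs. -/
def tdelta {n : ℕ} (σ τ : Fin n → BNode) : Ordinal := sInf (tdiff σ τ)

def tmeet {n : ℕ} (σ τ : Fin n → BNode) : Fin n → BNode := tres σ (tdelta σ τ)

def twedge {n : ℕ} (X : Set (Fin n → BNode)) : Set (Fin n → BNode) :=
  {w | ∃ σ ∈ X, ∃ τ ∈ X, tIncomp σ τ ∧ w = tmeet σ τ}

def tAntichain {n : ℕ} (X : Set (Fin n → BNode)) : Prop :=
  ∀ σ ∈ X, ∀ τ ∈ X, σ ≠ τ → tIncomp σ τ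

/-- `σ ∈ K^{[n]} = K^n ∩ T^{[n]}`. -/
def KTup (T K : Set BNode) (n : ℕ) (σ : Fin n → BNode) : Prop :=
  IsTup T n σ ∧ ∀ i, σ i ∈ K

/-- The pair `{σ, τ}` (with `Ht σ ≤ Ht τ`) is regular:
`D(τ(i), τ(0)) ∩ Ht(σ) = D(σ(i), σ(0))` for all `i < n`. -/
def RegPair (n : ℕ) (σ τ : Fin n → BNode) : Prop :=
  ∀ (h : 0 < n) (i : Fin n),
    diffSet (τ i) (τ ⟨0, h⟩) ∩ Set.Iio (ht (σ ⟨0, h⟩)) = diffSet (σ i) (σ ⟨0, h⟩)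

/-- A set of tuples is regular if every pair of its elements is regular. -/
def RegSet {n : ℕ} (X : Set (Fin n → BNode)) : Prop :=
  ∀ σ ∈ X, ∀ τ ∈ X, (∀ i, ht (σ i) ≤ ht (τ i)) → RegPair n σ τ

/-- A subtree of `T^{[n]}`: uncountable set of tuples closed under restriction. -/
def IsTupSubtree (T : Set BNode) (n : ℕ) (R : Set (Fin n → BNode)) : Prop :=
  (∀ σ ∈ R, IsTup T n σ) ∧ (∀ σ ∈ R, ∀ α, tres σ α ∈ R) ∧ ¬ R.Countable

/-- The family `F_n` of regular subtrees of `T^{[n]}` whose meets avoid `K^{[n]}`. -/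
def Fn (T K : Set BNode) (n : ℕ) : Set (Set (Fin n → BNode)) :=
  {R | IsTupSubtree T n R ∧ RegSet R ∧ ∀ w ∈ twedge R, ¬ KTup T K n w}

/-- `F_n^⊥`: subtrees of `T^{[n]}` orthogonal to every member of `F_n`. -/
def FnPerp (T K : Set BNode) (n : ℕ) : Set (Set (Fin n → BNode)) :=
  {B | IsTupSubtree T n B ∧ ∀ A ∈ Fn T K n, (A ∩ B).Countable}

/-- `⟨N_ξ : ξ ∈ C⟩` witnesses `φ₀(F_n)`. -/
def Phi0Witness (T K : Set BNode) (n : ℕ) (C : Set Ordinal)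
    (N : Ordinal → Set (Set (Fin n → BNode))) : Prop :=
  IsClubBelow C ∧
  (∀ ξ ∈ C, (N ξ).Countable ∧ N ξ ⊆ Fn T K n ∪ FnPerp T K n) ∧
  (∀ ξ ∈ C, ∀ η ∈ C, ξ ≤ η → N ξ ⊆ N η) ∧
  (∀ ν ∈ C, IsLimitOf C ν → N ν = ⋃ ξ ∈ C ∩ Set.Iio ν, N ξ) ∧
  (∀ ν ∈ C, ∀ σ : Fin n → BNode, IsTup T n σ → (∀ i, ht (σ i) = ν) →
    (∃ ν₀ < ν, ∀ ξ ∈ C, ν₀ < ξ → ξ < ν → ∃ A ∈ Fn T K n, A ∈ N ξ ∧ tres σ ξ ∈ A) ∨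
    (∃ B ∈ FnPerp T K n, B ∈ N ν ∧ σ ∈ B))

/-- The coloring `K^{[n]}_φ`. -/
def KPhi (T K : Set BNode) (n : ℕ) (C : Set Ordinal)
    (N : Ordinal → Set (Set (Fin n → BNode))) : Set (Fin n → BNode) :=
  {σ | IsTup T n σ ∧ ∃ ν ∈ C, (∀ i, ht (σ i) = ν) ∧
    ∃ B ∈ FnPerp T K n, B ∈ N ν ∧ σ ∈ B}

/-- The coloring `L^{[n]}_φ = (T^{[n]} ↾ C) \ K^{[n]}_φ`. -/
def LPhi (T K : Set BNode) (n : ℕ) (C : Set Ordinal)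
    (N : Ordinal → Set (Set (Fin n → BNode))) : Set (Fin n → BNode) :=
  {σ | IsTup T n σ ∧ (∃ ν ∈ C, ∀ i, ht (σ i) = ν) ∧ σ ∉ KPhi T K n C N}

/-- `ρ` is the `≤_lex`-sorted merge `σ ∪ τ` of the tuples `σ` and `τ`. -/
def IsMerge {n m : ℕ} (σ : Fin n → BNode) (τ : Fin m → BNode)
    (ρ : Fin (n + m) → BNode) : Prop :=
  (∀ i j : Fin (n + m), i ≤ j → lexLE (ρ i) (ρ j)) ∧
  (↑(List.ofFn ρ) : Multiset BNode) = ↑(List.ofFn σ) + ↑(List.ofFn τ)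

/-- `σ` is a subsequence of `τ`. -/
def IsSubseq {m n : ℕ} (σ : Fin m → BNode) (τ : Fin n → BNode) : Prop :=
  ∃ ι : Fin m → Fin n, StrictMono ι ∧ σ = τ ∘ ι

/-- A level sequence `{σ_α : α ∈ S}` in `T^{[n]}`. -/
def LevelSeq (T : Set BNode) (n : ℕ) (S : Set Ordinal)
    (σ : Ordinal → Fin n → BNode) : Prop :=
  ∀ α ∈ S, IsTup T n (σ α) ∧ ∀ i, ht (σ α i) = α

/-- The level sequence `{σ_α : α ∈ S}` is regular. -/
def RegSeq {n : ℕ} (S : Set Ordinal) (σ : Ordinal → Fin n → BNode) : Prop :=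
  ∀ α ∈ S, ∀ β ∈ S, α ≤ β → RegPair n (σ α) (σ β)

/-- The tree `R_X` generated by `X` (downward closure). -/
def downClosure (X : Set BNode) : Set BNode :=
  {r | ∃ t ∈ X, ∃ ξ ≤ ht t, r = restrict t ξ}

/-- The tree generated by a set of tuples. -/
def tDownClosure {n : ℕ} (X : Set (Fin n → BNode)) : Set (Fin n → BNode) :=
  {ρ | ∃ σ ∈ X, ∃ ξ, (∀ i, ξ ≤ ht (σ i)) ∧ ρ = tres σ ξ}

end Basis5
namespace Basis5

/-- Martin's Axiom `MA_{ℵ₁}`: every nonempty ccc partial preorder admits a filter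
meeting any `ℵ₁`-many dense sets. -/
def CCCPre (P : Type 1) (le : P → P → Prop) : Prop :=
  ∀ A : Set P, (∀ p ∈ A, ∀ q ∈ A, p ≠ q → ¬ ∃ r, le r p ∧ le r q) → A.Countable

def MAaleph1 : Prop :=
  ∀ (P : Type 1) (le : P → P → Prop), (∀ p, le p p) →
    (∀ p q r, le p q → le q r → le p r) → Nonempty P → CCCPre P le →
    ∀ (ι : Type 1) (D : ι → Set P), Cardinal.mk ι ≤ Cardinal.aleph 1 →
      (∀ i, ∀ p, ∃ q ∈ D i, le q p) →
      ∃ G : Set P, G.Nonempty ∧ (∀ p ∈ G, ∀ q, le p q → q ∈ G) ∧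
        (∀ p ∈ G, ∀ q ∈ G, ∃ r ∈ G, le r p ∧ le r q) ∧ ∀ i, (G ∩ D i).Nonempty

/-- `π(X) = X`. -/
def piClosed (X : Set BNode) : Prop :=
  ∀ s ∈ X, ∀ t ∈ X, ht s ≤ ht t → restrict t (ht s) ∈ X

/-- Every level-section of `X`, enumerated in `≤_lex`-increasing order, lies in `K_φ`. -/
def SectionsInKPhi (T K : Set BNode) (C : Set Ordinal)
    (N : (k : ℕ) → Ordinal → Set (Set (Fin k → BNode))) (X : Set BNode) : Prop :=
  ∀ α : Ordinal, {x ∈ X | ht x = α}.Nonempty →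
    ∃ (k : ℕ) (ρ : Fin k → BNode), Function.Injective ρ ∧
      (∀ i j : Fin k, i ≤ j → lexLE (ρ i) (ρ j)) ∧
      Set.range ρ = {x ∈ X | ht x = α} ∧ ρ ∈ KPhi T K k C (N k)

/-- All finite same-height `≤_lex`-sorted tuples from `X` lie in `K_φ`. -/
def FinLevelSubsetsInKPhi (T K : Set BNode) (C : Set Ordinal)
    (N : (k : ℕ) → Ordinal → Set (Set (Fin k → BNode))) (X : Set BNode) : Prop :=
  ∀ (k : ℕ) (ρ : Fin k → BNode), Function.Injective ρ → (∀ i, ρ i ∈ X) →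
    (∀ i j, ht (ρ i) = ht (ρ j)) → (∀ i j : Fin k, i ≤ j → lexLE (ρ i) (ρ j)) →
    ρ ∈ KPhi T K k C (N k)

section Forcing

variable {EM : Type 1}

/-- A condition of the forcing `∂*(K)`: a pair `(X_p, 𝓜_p)`.  Here `EM` is an abstract
type of (countable elementary submodels of `H(ω₂)`), `mem` its `∈`-relation,
`δe M = M ∩ ω₁`, and `E` the club `𝓔` of such models. -/
def IsCond (T K : Set BNode) (C : Set Ordinal)
    (N : (k : ℕ) → Ordinal → Set (Set (Fin k → BNode)))
    (mem : EM → EM → Prop) (δe : EM → Ordinal) (E : Set EM)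
    (p : Set BNode × Set EM) : Prop :=
  p.1.Finite ∧ p.1 ⊆ T ∧ (∀ x ∈ p.1, ht x ∈ C) ∧ piClosed p.1 ∧
  SectionsInKPhi T K C N p.1 ∧
  p.2.Finite ∧ p.2 ⊆ E ∧
  (∀ M ∈ p.2, ∀ M' ∈ p.2, M = M' ∨ mem M M' ∨ mem M' M) ∧
  (∀ x ∈ p.1, ∃ M ∈ p.2, ht x = δe M)

/-- The order of `∂*(K)`: coordinatewise reverse inclusion. -/
def condLE (p q : Set BNode × Set EM) : Prop := q.1 ⊆ p.1 ∧ q.2 ⊆ p.2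

end Forcing

/-- Closure of `X` in the tree topology. -/
def clTree (X : Set BNode) : Set BNode :=
  X ∪ {t | Order.IsSuccLimit (ht t) ∧ ∀ β < ht t, ∃ s ∈ X, extends' s t ∧ β ≤ ht s}

/-! ### Set-theoretic background: elementary submodels of `(V, ∈)`, properness, BPFA -/

/-- The language with a single binary relation (interpreted below as membership). -/
abbrev memLang : FirstOrder.Language := FirstOrder.Language.order

/-- `ZFSet.{0}` as a structure in the membership language: the unique binary relation
symbol is interpreted as `∈`. -/
instance : memLang.Structure ZFSet.{0} where
  RelMap | .le => fun x => x 0 ∈ x 1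

/-- `R` is (codes) a partial order on the set `P`. -/
def ZIsPoset (P R : ZFSet.{0}) : Prop :=
  (∀ x y : ZFSet.{0}, ZFSet.pair x y ∈ R → x ∈ P ∧ y ∈ P) ∧
  (∀ x ∈ P, ZFSet.pair x x ∈ R) ∧
  (∀ x y z : ZFSet.{0}, ZFSet.pair x y ∈ R → ZFSet.pair y z ∈ R → ZFSet.pair x z ∈ R) ∧
  (∀ x y : ZFSet.{0}, ZFSet.pair x y ∈ R → ZFSet.pair y x ∈ R → x = y)

def ZCompat (P R p q : ZFSet.{0}) : Prop :=
  ∃ r ∈ P, ZFSet.pair r p ∈ R ∧ ZFSet.pair r q ∈ R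

def ZDense (P R D : ZFSet.{0}) : Prop :=
  (∀ x ∈ D, x ∈ P) ∧ ∀ p ∈ P, ∃ q ∈ D, ZFSet.pair q p ∈ R

/-- Properness of the poset `(P, R)`, via countable elementary submodels of the
universe of sets: every condition in such a model has a generic extension. -/
def ZIsProper (P R : ZFSet.{0}) : Prop :=
  ∀ M : memLang.ElementarySubstructure ZFSet.{0}, (M : Set ZFSet.{0}).Countable →
    P ∈ (M : Set ZFSet.{0}) → R ∈ (M : Set ZFSet.{0}) →
    ∀ p ∈ (M : Set ZFSet.{0}), p ∈ P →
      ∃ q ∈ P, ZFSet.pair q p ∈ R ∧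
        ∀ D ∈ (M : Set ZFSet.{0}), ZDense P R D →
          ∀ r ∈ P, ZFSet.pair r q ∈ R → ∃ s ∈ (M : Set ZFSet.{0}), s ∈ D ∧ ZCompat P R s r

/-- The Bounded Proper Forcing Axiom: for every proper poset and `ℵ₁`-many maximal
antichains of size `≤ ℵ₁`, there is a filter meeting them all. -/
def BPFA : Prop :=
  ∀ P R : ZFSet.{0}, ZIsPoset P R → ZIsProper P R →
    ∀ (ι : Type 1) (A : ι → ZFSet.{0}), Cardinal.mk ι ≤ Cardinal.aleph 1 →
      (∀ i, (A i).toSet ⊆ P.toSet ∧ Cardinal.mk (A i).toSet ≤ Cardinal.aleph 1 ∧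
        (∀ a ∈ A i, ∀ b ∈ A i, a ≠ b → ¬ ZCompat P R a b) ∧
        (∀ p ∈ P, ∃ a ∈ A i, ZCompat P R a p)) →
      ∃ G : Set ZFSet.{0}, G ⊆ P.toSet ∧
        (∀ p ∈ G, ∀ q ∈ P.toSet, ZFSet.pair p q ∈ R → q ∈ G) ∧
        (∀ p ∈ G, ∀ q ∈ G, ∃ r ∈ G, ZFSet.pair r p ∈ R ∧ ZFSet.pair r q ∈ R) ∧
        ∀ i, ∃ a, a ∈ A i ∧ a ∈ G

/-! ### The axiom φ, stated for Aronszajn trees of `n`-tuples (the trees used in the paper) -/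

/-- An Aronszajn tree of `n`-tuples (a subtree of the `n`-th power of `2^{<ω₁}`). -/
def TupAronszajn (n : ℕ) (𝒯 : Set (Fin n → BNode)) : Prop :=
  (∀ σ ∈ 𝒯, (∀ i j, ht (σ i) = ht (σ j))) ∧
  (∀ σ ∈ 𝒯, ∀ α, tres σ α ∈ 𝒯) ∧ ¬ 𝒯.Countable ∧
  (∀ α, {σ ∈ 𝒯 | ∀ i, ht (σ i) = α}.Countable) ∧
  (∀ c ⊆ 𝒯, (∀ σ ∈ c, ∀ τ ∈ c, tExt σ τ ∨ tExt τ σ) → c.Countable)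

/-- A subtree of a tuple-tree. -/
def TupSubtree {n : ℕ} (𝒯 A : Set (Fin n → BNode)) : Prop :=
  A ⊆ 𝒯 ∧ (∀ σ ∈ A, ∀ α, tres σ α ∈ A) ∧ ¬ A.Countable

/-- `F^⊥` for a family `F` of subtrees of `𝒯`. -/
def GPerp {n : ℕ} (𝒯 : Set (Fin n → BNode)) (F : Set (Set (Fin n → BNode))) :
    Set (Set (Fin n → BNode)) :=
  {B | TupSubtree 𝒯 B ∧ ∀ A ∈ F, (A ∩ B).Countable}

/-- `φ₀(F)` for a family `F` of subtrees of the tree `𝒯`. -/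
def GPhi0 {n : ℕ} (𝒯 : Set (Fin n → BNode)) (F : Set (Set (Fin n → BNode))) : Prop :=
  ∃ (C : Set Ordinal) (N : Ordinal → Set (Set (Fin n → BNode))),
    IsClubBelow C ∧ (∀ ξ ∈ C, (N ξ).Countable ∧ N ξ ⊆ F ∪ GPerp 𝒯 F) ∧
    (∀ ξ ∈ C, ∀ η ∈ C, ξ ≤ η → N ξ ⊆ N η) ∧
    (∀ ν ∈ C, IsLimitOf C ν → N ν = ⋃ ξ ∈ C ∩ Set.Iio ν, N ξ) ∧
    ∀ ν ∈ C, ∀ σ ∈ 𝒯, (∀ i, ht (σ i) = ν) →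
      (∃ ν₀ < ν, ∀ ξ ∈ C, ν₀ < ξ → ξ < ν → ∃ A ∈ F, A ∈ N ξ ∧ tres σ ξ ∈ A) ∨
      (∃ B ∈ GPerp 𝒯 F, B ∈ N ν ∧ σ ∈ B)

/-- The axiom `φ`: for every Aronszajn (tuple-)tree `𝒯` and every family `F`
of subtrees of `𝒯`, `φ₀(F)` holds. -/
def phiAxiom : Prop :=
  ∀ (n : ℕ) (𝒯 : Set (Fin n → BNode)), TupAronszajn n 𝒯 →
    ∀ F : Set (Set (Fin n → BNode)), (∀ A ∈ F, TupSubtree 𝒯 A) → GPhi0 𝒯 F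

end Basis5

/-!
If a subtree `B` met every `A ∈ F` in a countable set, then for `ρ ∈ E` the nodes of `B` lying
in members of `N ρ` would have heights bounded by a countable `b ρ`. Call `ξ` good if it is a
limit of `E` closed under `b`; good points are unbounded in `ω₁`, so some `ν ∈ E` is a limit of
good points. For `t ∈ B` of height `ν`, the hypothesis yields a good `ξ < ν` and `A ∈ N ξ` with
`t ↾ ξ ∈ A`. By continuity `A ∈ N ρ` for some `ρ < ξ`, so `ξ = ht (t ↾ ξ) ≤ b ρ < ξ`.
-/

namespace Basis5

lemma omega1_eq : omega1 = Ordinal.omega 1 := Cardinal.ord_aleph 1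

lemma omega1_pos : 0 < omega1 := by
  rw [omega1, Cardinal.lt_ord, Ordinal.card_zero]
  exact Cardinal.aleph_pos 1

lemma countable_Iio_of_lt_omega1 {o : Ordinal.{0}} (h : o < omega1) : (Set.Iio o).Countable := by
  rw [omega1, Cardinal.lt_ord] at h
  rw [← Cardinal.le_aleph0_iff_set_countable, Cardinal.mk_Iio_ordinal, ← Cardinal.lt_aleph_one_iff]
  simpa [Cardinal.lift_aleph] using Cardinal.lift_lt.{0, 1}.mpr h

lemma exists_upperBound_lt_omega1 {S : Set Ordinal.{0}} (hS : S.Countable)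
    (h : ∀ x ∈ S, x < omega1) : ∃ β < omega1, ∀ x ∈ S, x ≤ β := by
  have := hS.to_subtype
  have hlt : ⨆ x : S, x.1 < omega1 := by
    rw [omega1_eq] at h ⊢
    exact Ordinal.iSup_lt_omega_one fun x => h x.1 x.2
  have hbdd : BddAbove (Set.range fun x : S => x.1) := ⟨omega1, by
    rintro _ ⟨x, rfl⟩
    exact (h x.1 x.2).le⟩
  exact ⟨_, hlt, fun x hx => le_ciSup hbdd ⟨x, hx⟩⟩

lemma ht_eq_of_isSome_iff {t : BNode} {a : Ordinal} (h : ∀ ξ, (t.1 ξ).isSome ↔ ξ < a) :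
    ht t = a := by
  have hset : {b | ∀ ξ, (t.1 ξ).isSome ↔ ξ < b} = {a} := by
    ext b
    refine ⟨fun hb => ?_, fun hb => hb ▸ h⟩
    have hiff : ∀ ξ, ξ < b ↔ ξ < a := fun ξ => (hb ξ).symm.trans (h ξ)
    exact le_antisymm (le_of_forall_lt fun c hc => (hiff c).mp hc)
      (le_of_forall_lt fun c hc => (hiff c).mpr hc)
  rw [ht, hset, csInf_singleton]

lemma isSome_iff_lt_ht (t : BNode) (ξ : Ordinal) : (t.1 ξ).isSome ↔ ξ < ht t := by
  obtain ⟨a, -, hfa⟩ := t.2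
  rw [ht_eq_of_isSome_iff hfa]
  exact hfa ξ

lemma ht_lt_omega1 (t : BNode) : ht t < omega1 := by
  obtain ⟨a, ha, hfa⟩ := t.2
  rwa [ht_eq_of_isSome_iff hfa]

lemma ht_restrict (t : BNode) (α : Ordinal) : ht (restrict t α) = min α (ht t) := by
  refine ht_eq_of_isSome_iff fun ξ => ?_
  change (if ξ < α then t.1 ξ else none).isSome ↔ _
  by_cases h : ξ < α
  · simp [h, isSome_iff_lt_ht t ξ]
  · simp [h]

lemma exists_ht_le_of_countable {S : Set BNode} (hS : S.Countable) :
    ∃ β < omega1, ∀ x ∈ S, ht x ≤ β := by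
  obtain ⟨β, hβ, hle⟩ := exists_upperBound_lt_omega1 (hS.image ht)
    (by rintro _ ⟨x, -, rfl⟩; exact ht_lt_omega1 x)
  exact ⟨β, hβ, fun x hx => hle _ ⟨x, hx, rfl⟩⟩

lemma IsSubtree.exists_ht_eq {T B : Set BNode}
    (hlev : ∀ α, {t : BNode | t ∈ T ∧ ht t = α}.Countable) (hB : IsSubtree T B)
    {ν : Ordinal} (hν : ν < omega1) : ∃ t ∈ B, ht t = ν := by
  have htall : ∃ t ∈ B, ν ≤ ht t := by
    by_contra! hlow
    refine hB.2.2 (((countable_Iio_of_lt_omega1 hν).biUnion fun α _ => hlev α).mono ?_)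
    intro t htB
    exact Set.mem_biUnion (hlow t htB) ⟨hB.1 htB, rfl⟩
  obtain ⟨t, htB, hνt⟩ := htall
  exact ⟨restrict t ν, hB.2.1 t htB ν, by rw [ht_restrict, min_eq_left hνt]⟩

lemma isLimitOf_of_exists_between {S : Set Ordinal} {ν : Ordinal}
    (hne : (S ∩ Set.Iio ν).Nonempty) (h : ∀ p < ν, ∃ ξ ∈ S, p < ξ ∧ ξ < ν) :
    IsLimitOf S ν := by
  have hbdd : BddAbove (S ∩ Set.Iio ν) := ⟨ν, fun x hx => hx.2.le⟩
  refine ⟨hne, le_antisymm (csSup_le hne fun x hx => hx.2.le) (not_lt.mp fun hlt => ?_)⟩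
  obtain ⟨ξ, hξS, hsup, hξν⟩ := h _ hlt
  exact hsup.not_ge (le_csSup hbdd ⟨hξS, hξν⟩)

lemma IsLimitOf.exists_between {S : Set Ordinal} {ν p : Ordinal} (h : IsLimitOf S ν)
    (hp : p < ν) : ∃ ξ ∈ S, p < ξ ∧ ξ < ν := by
  by_contra! hle
  have hsup : sSup (S ∩ Set.Iio ν) ≤ p := csSup_le h.1 fun ξ hξ =>
    not_lt.mp fun hpξ => (hle ξ hξ.1 hpξ).not_gt hξ.2
  exact (h.2 ▸ hsup).not_gt hp

lemma IsLimitOf.mono {S S' : Set Ordinal} {ν : Ordinal} (h : IsLimitOf S ν) (hS : S ⊆ S') :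
    IsLimitOf S' ν :=
  isLimitOf_of_exists_between (h.1.mono (Set.inter_subset_inter_left _ hS)) fun _ hp =>
    let ⟨ξ, hξS, hξ⟩ := h.exists_between hp
    ⟨ξ, hS hξS, hξ⟩

lemma exists_isLimitOf_closed_under {S : Set Ordinal} (hS : S ⊆ Set.Iio omega1)
    (hunb : ∀ a < omega1, ∃ b ∈ S, a < b) (f : Ordinal → Ordinal)
    (hf : ∀ η < omega1, f η < omega1) {α : Ordinal} (hα : α < omega1) :
    ∃ ν < omega1, α < ν ∧ IsLimitOf S ν ∧ ∀ η < ν, f η < ν := by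
  have hstep : ∀ x < omega1, ∃ y ∈ S, x < y ∧ ∀ η < x, f η < y := by
    intro x hx
    obtain ⟨β, hβ, hβf⟩ := exists_upperBound_lt_omega1 ((countable_Iio_of_lt_omega1 hx).image f)
      (by rintro _ ⟨η, hη, rfl⟩; exact hf η (hη.trans hx))
    obtain ⟨y, hyS, hy⟩ := hunb (max x β) (max_lt hx hβ)
    exact ⟨y, hyS, (le_max_left x β).trans_lt hy,
      fun η hη => ((hβf _ ⟨η, hη, rfl⟩).trans (le_max_right x β)).trans_lt hy⟩
  choose! next hnextS hlt hnextf using hstep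
  let g : ℕ → Ordinal := fun n => next^[n] α
  have hg_succ : ∀ n, g (n + 1) = next (g n) := fun n => Function.iterate_succ_apply' next n α
  have hg_lt : ∀ n, g n < omega1 := by
    intro n
    induction n with
    | zero => exact hα
    | succ n ih => exact hg_succ n ▸ hS (hnextS _ ih)
  have hbdd : BddAbove (Set.range g) := Ordinal.bddAbove_of_small
  have hgν : ∀ n, g n < ⨆ n, g n := fun n =>
    (hg_succ n ▸ hlt _ (hg_lt n)).trans_le (le_ciSup hbdd (n + 1))
  have hbelow : ∀ p < ⨆ n, g n, ∃ n, p < g n := fun p hp => (lt_ciSup_iff hbdd).mp hp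
  refine ⟨⨆ n, g n, omega1_eq ▸ Ordinal.iSup_lt_omega_one (omega1_eq ▸ hg_lt), hgν 0, ?_, ?_⟩
  · refine isLimitOf_of_exists_between ⟨g 1, hg_succ 0 ▸ hnextS _ hα, hgν 1⟩ fun p hp => ?_
    obtain ⟨n, hn⟩ := hbelow p hp
    exact ⟨g (n + 1), hg_succ n ▸ hnextS _ (hg_lt n),
      hn.trans (hg_succ n ▸ hlt _ (hg_lt n)), hgν (n + 1)⟩
  · intro η hη
    obtain ⟨n, hn⟩ := hbelow η hη
    exact (hg_succ n ▸ hnextf _ (hg_lt n) η hn).trans (hgν (n + 1))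

lemma IsClubBelow.mem_of_isLimitOf {C : Set Ordinal} (hC : IsClubBelow C) {ν : Ordinal}
    (hν : ν < omega1) (h : IsLimitOf C ν) : ν ∈ C :=
  hC.2.2 ν hν h.1 h.2

theorem stmt18_general (T : Set BNode) (hT : IsAronszajn T) (F : Set (Set BNode))
    (E : Set Ordinal) (N : Ordinal → Set (Set BNode))
    (hE : IsClubBelow E) (hcnt : ∀ ν ∈ E, (N ν).Countable ∧ N ν ⊆ F)
    (hcont : ∀ ν ∈ E, IsLimitOf E ν → N ν = ⋃ ξ ∈ E ∩ Set.Iio ν, N ξ)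
    (hdich : ∀ ν ∈ E, ∀ t ∈ T, ht t = ν →
      ∃ ν₀ < ν, ∀ ξ ∈ E, ν₀ < ξ → ξ < ν →
        ∃ A ∈ F, A ∈ N ξ ∧ restrict t ξ ∈ A) :
    ∀ B, IsSubtree T B → ∃ A ∈ F, ¬ (A ∩ B).Countable := by
  intro B hB
  by_contra! hperp
  have hbound : ∀ ρ, ∃ β < omega1, ρ ∈ E → ∀ A ∈ N ρ, ∀ x ∈ A ∩ B, ht x ≤ β := by
    intro ρ
    by_cases hρ : ρ ∈ E
    · obtain ⟨β, hβ, hle⟩ := exists_ht_le_of_countable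
        ((hcnt ρ hρ).1.biUnion fun A hA => hperp A ((hcnt ρ hρ).2 hA))
      exact ⟨β, hβ, fun _ A hA x hx => hle x (Set.mem_biUnion hA hx)⟩
    · exact ⟨0, omega1_pos, fun h => absurd h hρ⟩
  choose b hb_lt hb using hbound
  let D := {ξ ∈ E | IsLimitOf E ξ ∧ ∀ ρ < ξ, b ρ < ξ}
  have hD_unbounded : ∀ α < omega1, ∃ ξ ∈ D, α < ξ := by
    intro α hα
    obtain ⟨ξ, hξ, hαξ, hlim, hclosed⟩ :=
      exists_isLimitOf_closed_under hE.1 hE.2.1 b (fun η _ => hb_lt η) hα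
    exact ⟨ξ, ⟨hE.mem_of_isLimitOf hξ hlim, hlim, hclosed⟩, hαξ⟩
  obtain ⟨ν, hν, -, hνD, -⟩ := exists_isLimitOf_closed_under (fun ξ hξ => hE.1 hξ.1)
    hD_unbounded id (fun _ h => h) omega1_pos
  have hνE : ν ∈ E := hE.mem_of_isLimitOf hν (hνD.mono fun ξ hξ => hξ.1)
  obtain ⟨t, htB, htν⟩ := hB.exists_ht_eq hT.2.2.1 hν
  obtain ⟨p, hpν, hp⟩ := hdich ν hνE t (hB.1 htB) htν
  obtain ⟨ξ, ⟨hξE, hξlim, hξclosed⟩, hpξ, hξν⟩ := hνD.exists_between hpν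
  obtain ⟨A, -, hAξ, htA⟩ := hp ξ hξE hpξ hξν
  rw [hcont ξ hξE hξlim] at hAξ
  obtain ⟨ρ, ⟨hρE, hρξ⟩, hAρ⟩ := Set.mem_iUnion₂.mp hAξ
  have hht : ht (restrict t ξ) = ξ := by rw [ht_restrict, htν, min_eq_left hξν.le]
  exact (hξclosed ρ hρξ).not_ge (hht ▸ hb ρ hρE A hAρ _ ⟨htA, hB.2.1 t htB ξ⟩)

/-- `ψ₀(F)` implies that `F` is predense, i.e. every subtree of `T`
has uncountable intersection with some member of `F`. -/
theorem stmt18 (T : Set BNode) (hT : IsAronszajn T) (F : Set (Set BNode))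
    (hF : ∀ A ∈ F, IsSubtree T A)
    (E : Set Ordinal) (N : Ordinal → Set (Set BNode))
    (hE : IsClubBelow E) (hcnt : ∀ ν ∈ E, (N ν).Countable ∧ N ν ⊆ F)
    (hmono : ∀ ξ ∈ E, ∀ η ∈ E, ξ ≤ η → N ξ ⊆ N η)
    (hcont : ∀ ν ∈ E, IsLimitOf E ν → N ν = ⋃ ξ ∈ E ∩ Set.Iio ν, N ξ)
    (hdich : ∀ ν ∈ E, ∀ t ∈ T, ht t = ν →
      ∃ ν₀ < ν, ∀ ξ ∈ E, ν₀ < ξ → ξ < ν →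
        ∃ A ∈ F, A ∈ N ξ ∧ restrict t ξ ∈ A) :
    ∀ B, IsSubtree T B → ∃ A ∈ F, ¬ (A ∩ B).Countable :=
  stmt18_general T hT F E N hE hcnt hcont hdich
end Basis5
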